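/- arXiv:1110.3128 — 2 statements merged into one kernel-verified Lean document; each statement's English description precedes it below -/
import Mathlib

section
/- If $D$ is a simplicial 2-ball with vertex set $V$, $W \subseteq V$ is a set of vertices all lying on $\partial D$, and the maximal subcomplex $I$ of $D$ on vertex set $V \setminus W$ has more than one connected component, then there exists an edge of $D$ not contained in $\partial D$ whose two endpoints both lie in $W$. -/
/-!
Suppose every edge of `D` with both ends in `W` lies on `∂D`, so that it lies in exactly one
triangle. Removing the finitely many vertices of `W` from the disk `|D|` leaves a connected
space. It is covered by the open stars of the vertices outside `W` and of the edges inside `W`,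
and two of these open sets overlap only inside a common triangle. Labelling each of them by
whether a triangle through it meets the component of a fixed vertex `a` of `I`, the labels agree
on overlaps, hence everywhere, so every vertex of `I` lies in the component of `a`.
-/

namespace SCPaper

/-- An abstract simplicial complex on vertex type `V`. -/
structure SComplex (V : Type) where
  faces : Set (Finset V)
  nonempty_mem : ∀ s ∈ faces, s.Nonempty
  down_closed : ∀ s ∈ faces, ∀ t ⊆ s, t.Nonempty → t ∈ faces

variable {V : Type} [DecidableEq V]

/-- The geometric realization of a simplicial complex, as a subspace of `V → ℝ`. -/
def geomRealization (K : SComplex V) : Set (V → ℝ) :=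
  {f | ∃ s ∈ K.faces, (∀ v, 0 ≤ f v) ∧ (∀ v ∉ s, f v = 0) ∧ s.sum f = 1}

/-- `K` is a simplicial `d`-ball: its realization is homeomorphic to a closed `d`-ball. -/
def IsBall (d : ℕ) (K : SComplex V) : Prop :=
  Nonempty ((geomRealization K) ≃ₜ (Metric.closedBall (0 : EuclideanSpace ℝ (Fin d)) 1))

/-- The vertex set of a complex. -/
def vertexSet (K : SComplex V) : Set V := {v | {v} ∈ K.faces}

/-- The facets (maximal faces) of a complex. -/
def facets (K : SComplex V) : Set (Finset V) :=
  {s | s ∈ K.faces ∧ ∀ t ∈ K.faces, s ⊆ t → s = t}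

/-- A complex is pure of dimension `d`. -/
def IsPure (d : ℕ) (K : SComplex V) : Prop :=
  (∀ s ∈ K.faces, s.card ≤ d + 1) ∧ ∀ s ∈ K.faces, ∃ t ∈ K.faces, s ⊆ t ∧ t.card = d + 1

/-- A complex has dimension `n`. -/
def HasDim (n : ℕ) (K : SComplex V) : Prop :=
  (∀ s ∈ K.faces, s.card ≤ n + 1) ∧ ∃ s ∈ K.faces, s.card = n + 1

/-- The full simplex on a vertex set `s`. -/
def simplexOn (s : Finset V) : SComplex V where
  faces := {t | t ⊆ s ∧ t.Nonempty}
  nonempty_mem := fun t ht => ht.2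
  down_closed := fun a ha t ht hne => ⟨ht.trans ha.1, hne⟩

/-- Intersection of two complexes. -/
def interC (K L : SComplex V) : SComplex V where
  faces := K.faces ∩ L.faces
  nonempty_mem := fun s hs => K.nonempty_mem s hs.1
  down_closed := fun s hs t ht hne =>
    ⟨K.down_closed s hs.1 t ht hne, L.down_closed s hs.2 t ht hne⟩

/-- The boundary complex of a pure `d`-dimensional ball-like complex: it is generated by the
`(d-1)`-dimensional faces (of cardinality `d`) contained in exactly one facet. -/
def boundaryC (d : ℕ) (K : SComplex V) : SComplex V where
  faces := {t | t.Nonempty ∧ ∃ s ∈ K.faces, t ⊆ s ∧ s.card = d ∧ ∃! F, F ∈ facets K ∧ s ⊆ F}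
  nonempty_mem := fun s hs => hs.1
  down_closed := by
    rintro s ⟨-, u, hu, hsu, hcard, hF⟩ t ht hne
    exact ⟨hne, u, hu, ht.trans hsu, hcard, hF⟩

/-- The closed star `Star_K I`: all faces of `K` contained in a face meeting a vertex of `I`. -/
def starC (K I : SComplex V) : SComplex V where
  faces := {t | t ∈ K.faces ∧ ∃ s ∈ K.faces, t ⊆ s ∧ ∃ v ∈ s, {v} ∈ I.faces}
  nonempty_mem := fun s hs => K.nonempty_mem s hs.1
  down_closed := by
    rintro s ⟨hsK, u, hu, hsu, hv⟩ t ht hne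
    exact ⟨K.down_closed s hsK t ht hne, u, hu, ht.trans hsu, hv⟩

/-- The maximal (full) subcomplex of `K` on a vertex set `S`. -/
def fullSub (K : SComplex V) (S : Set V) : SComplex V where
  faces := {t | t ∈ K.faces ∧ ∀ v ∈ t, v ∈ S}
  nonempty_mem := fun s hs => K.nonempty_mem s hs.1
  down_closed := fun s hs t ht hne =>
    ⟨K.down_closed s hs.1 t ht hne, fun v hv => hs.2 v (ht hv)⟩

/-- The closure of the complement of a subcomplex `L` in `K`: the subcomplex generated by
the faces of `K` not in `L`. -/
def compClosure (K L : SComplex V) : SComplex V where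
  faces := {t | t.Nonempty ∧ ∃ s ∈ K.faces, s ∉ L.faces ∧ t ⊆ s}
  nonempty_mem := fun s hs => hs.1
  down_closed := by
    rintro s ⟨-, u, hu, huL, hsu⟩ t ht hne
    exact ⟨hne, u, hu, huL, ht.trans hsu⟩

/-- Two vertices are connected by an edge path in `K`. -/
def Reach (K : SComplex V) : V → V → Prop :=
  Relation.ReflTransGen (fun a b => ({a, b} : Finset V) ∈ K.faces)

/-- A complex is connected (as a 1-skeleton graph, nonempty). -/
def IsConnectedC (K : SComplex V) : Prop :=
  (∃ v, v ∈ vertexSet K) ∧ ∀ u v, u ∈ vertexSet K → v ∈ vertexSet K → Reach K u v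

/-- The connected component of the vertex `v` in `K`. -/
def componentOf (K : SComplex V) (v : V) : SComplex V where
  faces := {t | t ∈ K.faces ∧ ∀ u ∈ t, Reach K v u}
  nonempty_mem := fun s hs => K.nonempty_mem s hs.1
  down_closed := fun s hs t ht hne =>
    ⟨K.down_closed s hs.1 t ht hne, fun u hu => hs.2 u (ht hu)⟩

/-- `C` is a connected component of `K`. -/
def IsComponentOf (K C : SComplex V) : Prop :=
  ∃ v, {v} ∈ K.faces ∧ C = componentOf K v

/-- An interior vertex of a `3`-ball `B`: a vertex not on the boundary. -/
def IsInteriorVertex (B : SComplex V) (v : V) : Prop :=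
  {v} ∈ B.faces ∧ {v} ∉ (boundaryC 3 B).faces

/-- The interior graph of a `3`-ball: interior vertices and interior edges. -/
def interiorGraph (B : SComplex V) : SComplex V where
  faces := {t | t ∈ B.faces ∧ t.card ≤ 2 ∧ ∀ v ∈ t, IsInteriorVertex B v}
  nonempty_mem := fun s hs => B.nonempty_mem s hs.1
  down_closed := fun s hs t ht hne =>
    ⟨B.down_closed s hs.1 t ht hne, le_trans (Finset.card_le_card ht) hs.2.1,
      fun v hv => hs.2.2 v (ht hv)⟩

/-- A maximal interior graph component of a `3`-ball. -/
def IsMaxIntComp (B I : SComplex V) : Prop :=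
  IsComponentOf (interiorGraph B) I

/-- A spanning edge of a `3`-ball: an edge not on the boundary with both endpoints on it. -/
def IsSpanningEdge (B : SComplex V) (e : Finset V) : Prop :=
  e ∈ B.faces ∧ e.card = 2 ∧ e ∉ (boundaryC 3 B).faces ∧
    ∀ v ∈ e, {v} ∈ (boundaryC 3 B).faces

/-- A spanning edge `e` is strict if there is no maximal interior graph component `I` such that
both endpoints of `e` lie in exactly one connected component of `∂B ∩ Star_B I`. -/
def IsStrictSpanningEdge (B : SComplex V) (e : Finset V) : Prop :=
  IsSpanningEdge B e ∧
    ¬ ∃ I, IsMaxIntComp B I ∧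
      ∃! C, IsComponentOf (interC (boundaryC 3 B) (starC B I)) C ∧ ∀ v ∈ e, {v} ∈ C.faces

/-- A `3`-ball is reduced: every interior `2`-face has at most one boundary edge. -/
def IsReduced (B : SComplex V) : Prop :=
  ∀ s ∈ B.faces, s.card = 3 → s ∉ (boundaryC 3 B).faces →
    ({e : Finset V | e ⊆ s ∧ e.card = 2 ∧ e ∈ (boundaryC 3 B).faces}).Subsingleton

/-- Constructibility of pure `d`-dimensional simplicial complexes. -/
inductive Constructible : ℕ → SComplex V → Prop
  | simplex (d : ℕ) (K : SComplex V) (s : Finset V) (hcard : s.card = d + 1)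
      (hK : K.faces = {t | t ⊆ s ∧ t.Nonempty}) : Constructible d K
  | union (d : ℕ) (K C₁ C₂ : SComplex V)
      (h₁ : C₁.faces ⊆ K.faces) (h₂ : C₂.faces ⊆ K.faces)
      (hp₁ : IsPure d C₁) (hp₂ : IsPure d C₂)
      (hu : K.faces = C₁.faces ∪ C₂.faces)
      (hdim : HasDim (d - 1) (interC C₁ C₂))
      (hc₁ : Constructible d C₁) (hc₂ : Constructible d C₂)
      (hci : Constructible (d - 1) (interC C₁ C₂)) : Constructible d K

/-- Shellability of a pure `d`-dimensional complex. -/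
def Shellable (d : ℕ) (K : SComplex V) : Prop :=
  ∃ (t : ℕ) (F : Fin t → Finset V),
    0 < t ∧ Function.Injective F ∧
    (∀ i, F i ∈ K.faces ∧ (F i).card = d + 1) ∧
    (∀ s, s ∈ K.faces ↔ s.Nonempty ∧ ∃ i, s ⊆ F i) ∧
    ∀ k : Fin t, 0 < (k : ℕ) →
      (∃ s : Finset V, s.Nonempty ∧ s ⊆ F k ∧ ∃ j, j < k ∧ s ⊆ F j) ∧
      ∀ s : Finset V, (s.Nonempty ∧ s ⊆ F k ∧ ∃ j, j < k ∧ s ⊆ F j) →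
        ∃ u : Finset V, s ⊆ u ∧ u.card = d ∧ u ⊆ F k ∧ ∃ j, j < k ∧ u ⊆ F j

/-- A witness for a construction (deconstruction) of a constructible complex. -/
inductive ConstructionOf (d : ℕ) : SComplex V → Type
  | simplex (K : SComplex V) (s : Finset V) (hcard : s.card = d + 1)
      (hK : K.faces = {t | t ⊆ s ∧ t.Nonempty}) : ConstructionOf d K
  | union (K C₁ C₂ : SComplex V)
      (h₁ : C₁.faces ⊆ K.faces) (h₂ : C₂.faces ⊆ K.faces)
      (hp₁ : IsPure d C₁) (hp₂ : IsPure d C₂)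
      (hu : K.faces = C₁.faces ∪ C₂.faces)
      (hdim : HasDim (d - 1) (interC C₁ C₂))
      (hci : Constructible (d - 1) (interC C₁ C₂))
      (t₁ : ConstructionOf d C₁) (t₂ : ConstructionOf d C₂) : ConstructionOf d K

/-- The decomposition steps `(B', B'₁, B'₂)` occurring in a construction. -/
def ConstructionOf.nodes {d : ℕ} :
    {K : SComplex V} → ConstructionOf d K → Set (SComplex V × SComplex V × SComplex V)
  | _, .simplex _ _ _ _ => ∅
  | _, .union K C₁ C₂ _ _ _ _ _ _ _ t₁ t₂ => insert (K, C₁, C₂) (t₁.nodes ∪ t₂.nodes)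

end SCPaper

open Metric Set

theorem IsPreconnected.sdiff_of_homeomorph {α β : Type*} [TopologicalSpace α]
    [TopologicalSpace β] {A : Set α} {B : Set β} (Φ : A ≃ₜ B)
    (hB : ∀ Q : Set β, Q.Countable → IsPreconnected (B \ Q)) {P : Set α} (hP : P.Countable) :
    IsPreconnected (A \ P) := by
  set f : B → α := fun y => Φ.symm y
  have hf : f.Injective := Subtype.val_injective.comp Φ.symm.injective
  have hcompl : IsPreconnected (f ⁻¹' P)ᶜ := by
    rw [← Topology.IsInducing.subtypeVal.isPreconnected_image, image_val_compl]
    exact hB _ ((hP.preimage hf).image _)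
  have hrange : range f = A := by
    ext x
    exact ⟨fun ⟨y, hy⟩ => hy ▸ (Φ.symm y).2, fun hx => ⟨Φ ⟨x, hx⟩, by simp [f]⟩⟩
  simpa only [image_compl_preimage, hrange] using
    hcompl.image f (continuous_subtype_val.comp Φ.symm.continuous).continuousOn

section NormedSpace

variable {E : Type*} [NormedAddCommGroup E] [NormedSpace ℝ E]

theorem Set.Countable.isPreconnected_ball_sdiff (hE : 1 < Module.rank ℝ E) {Q : Set E}
    (hQ : Q.Countable) : IsPreconnected (ball (0 : E) 1 \ Q) :=
  IsPreconnected.sdiff_of_homeomorph (Homeomorph.unitBall.symm.trans (Homeomorph.Set.univ E).symm)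
    (fun Q hQ => by
      simpa only [← compl_eq_univ_sdiff] using
        (hQ.isConnected_compl_of_one_lt_rank hE).isPreconnected) hQ

theorem Set.Countable.isPreconnected_closedBall_sdiff (hE : 1 < Module.rank ℝ E) {Q : Set E}
    (hQ : Q.Countable) : IsPreconnected (closedBall (0 : E) 1 \ Q) := by
  have : Nontrivial E := (rank_pos_iff_nontrivial (R := ℝ)).1 (zero_lt_one.trans hE)
  refine (hQ.isPreconnected_ball_sdiff hE).subset_closure
    (sdiff_subset_sdiff_left ball_subset_closedBall) fun x hx => ?_
  have hball : ball (0 : E) 1 ⊆ closure (ball (0 : E) 1 \ Q) :=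
    (hQ.dense_compl ℝ).open_subset_closure_inter isOpen_ball
  rw [← closure_ball (0 : E) one_ne_zero] at hx
  simpa only [closure_closure] using closure_mono hball hx.1

end NormedSpace

section PositiveCoordinates

variable {ι : Type*}

theorem isOpen_setOf_exists_forall_pos (𝒯 : Set (Finset ι)) :
    IsOpen {g : ι → ℝ | ∃ t ∈ 𝒯, ∀ i ∈ t, 0 < g i} := by
  have : {g : ι → ℝ | ∃ t ∈ 𝒯, ∀ i ∈ t, 0 < g i} = ⋃ t ∈ 𝒯, ⋂ i ∈ t, {g | 0 < g i} := by
    ext; simp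
  rw [this]
  exact isOpen_biUnion fun t _ =>
    isOpen_biInter_finset fun i _ => isOpen_lt continuous_const (continuous_apply i)

theorem IsPreconnected.label_imp_label {S : Set (ι → ℝ)} (hS : IsPreconnected S)
    {𝒯 : Set (Finset ι)} {ℓ : Finset ι → Prop}
    (hcover : ∀ g ∈ S, ∃ t ∈ 𝒯, ∀ i ∈ t, 0 < g i)
    (hcompat : ∀ g ∈ S, ∀ t ∈ 𝒯, ∀ t' ∈ 𝒯,
      (∀ i ∈ t, 0 < g i) → (∀ i ∈ t', 0 < g i) → ℓ t → ℓ t')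
    {g g' : ι → ℝ} (hg : g ∈ S) (hg' : g' ∈ S) {t t' : Finset ι} (ht : t ∈ 𝒯) (ht' : t' ∈ 𝒯)
    (hgt : ∀ i ∈ t, 0 < g i) (hgt' : ∀ i ∈ t', 0 < g' i) (hℓ : ℓ t) : ℓ t' := by
  by_contra hℓ'
  obtain ⟨h, hhS, ⟨t₁, ⟨ht₁, hℓ₁⟩, hpos₁⟩, ⟨t₂, ⟨ht₂, hℓ₂⟩, hpos₂⟩⟩ :=
    hS _ _ (isOpen_setOf_exists_forall_pos {t ∈ 𝒯 | ℓ t})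
      (isOpen_setOf_exists_forall_pos {t ∈ 𝒯 | ¬ ℓ t})
      (fun g hg => by
        obtain ⟨t, ht, hpos⟩ := hcover g hg
        by_cases hℓt : ℓ t
        exacts [Or.inl ⟨t, ⟨ht, hℓt⟩, hpos⟩, Or.inr ⟨t, ⟨ht, hℓt⟩, hpos⟩])
      ⟨g, hg, t, ⟨ht, hℓ⟩, hgt⟩ ⟨g', hg', t', ⟨ht', hℓ'⟩, hgt'⟩
  exact hℓ₂ (hcompat h hhS t₁ ht₁ t₂ ht₂ hpos₁ hpos₂ hℓ₁)

end PositiveCoordinates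

namespace SCPaper

variable {V : Type}

theorem IsBall.isPreconnected_geomRealization_sdiff {d : ℕ} {K : SComplex V} (hK : IsBall d K)
    (hd : 2 ≤ d) {P : Set (V → ℝ)} (hP : P.Countable) :
    IsPreconnected (geomRealization K \ P) := by
  obtain ⟨Φ⟩ := hK
  have hrank : 1 < Module.rank ℝ (EuclideanSpace ℝ (Fin d)) := by
    rw [← Module.finrank_eq_rank, finrank_euclideanSpace_fin]
    exact_mod_cast hd
  exact IsPreconnected.sdiff_of_homeomorph Φ
    (fun _ hQ => hQ.isPreconnected_closedBall_sdiff hrank) hP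

theorem IsBall.isCompact_geomRealization {d : ℕ} {K : SComplex V} (hK : IsBall d K) :
    IsCompact (geomRealization K) := by
  obtain ⟨Φ⟩ := hK
  have : CompactSpace (closedBall (0 : EuclideanSpace ℝ (Fin d)) 1) :=
    isCompact_iff_compactSpace.mp (isCompact_closedBall _ _)
  exact isCompact_iff_compactSpace.mpr Φ.symm.compactSpace

theorem exists_mem_faces_of_mem_geomRealization {K : SComplex V} {g : V → ℝ}
    (hg : g ∈ geomRealization K) : ∃ s ∈ K.faces, ∀ v, 0 < g v → v ∈ s := by
  obtain ⟨s, hs, -, hzero, -⟩ := hg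
  exact ⟨s, hs, fun v hv => by_contra fun hvs => hv.ne' (hzero v hvs)⟩

theorem exists_pos_of_mem_geomRealization {K : SComplex V} {g : V → ℝ}
    (hg : g ∈ geomRealization K) : ∃ v, 0 < g v := by
  obtain ⟨s, -, -, -, hsum⟩ := hg
  obtain ⟨v, -, hv⟩ := Finset.exists_lt_of_sum_lt (s := s) (f := fun _ => (0 : ℝ)) (g := g) (by
    rw [hsum, Finset.sum_const_zero]; exact one_pos)
  exact ⟨v, hv⟩

theorem vertexSet_finite {K : SComplex V} (hK : K.faces.Finite) : (vertexSet K).Finite :=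
  hK.preimage Finset.singleton_injective.injOn

theorem exists_facet_superset {K : SComplex V} (hK : K.faces.Finite) {s : Finset V}
    (hs : s ∈ K.faces) : ∃ F ∈ facets K, s ⊆ F := by
  obtain ⟨F, hsF, hF⟩ := hK.exists_le_maximal hs
  exact ⟨F, ⟨hF.prop, fun t ht hFt => le_antisymm hFt (hF.le_of_ge ht hFt)⟩, hsF⟩

theorem mem_faces_of_mem_boundaryC {d : ℕ} {K : SComplex V} {t : Finset V}
    (ht : t ∈ (boundaryC d K).faces) : t ∈ K.faces := by
  obtain ⟨hne, s, hs, hts, -⟩ := ht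
  exact K.down_closed s hs t hts hne

theorem existsUnique_facet_of_mem_boundaryC {d : ℕ} {K : SComplex V} {e : Finset V}
    (he : e ∈ (boundaryC d K).faces) (hcard : e.card = d) : ∃! F, F ∈ facets K ∧ e ⊆ F := by
  obtain ⟨-, s, -, hes, hs, hunique⟩ := he
  rwa [Finset.eq_of_subset_of_card_le hes (hs.trans hcard.symm).le]

variable [DecidableEq V]

theorem exists_pos_pair_or_eq_single {K : SComplex V} {g : V → ℝ}
    (hg : g ∈ geomRealization K) :
    (∃ u v, u ≠ v ∧ 0 < g u ∧ 0 < g v) ∨ ∃ v, g = Pi.single v 1 := by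
  obtain ⟨v, hv⟩ := exists_pos_of_mem_geomRealization hg
  by_cases h : ∃ u, u ≠ v ∧ 0 < g u
  · obtain ⟨u, huv, hu⟩ := h
    exact Or.inl ⟨u, v, huv, hu, hv⟩
  push Not at h
  obtain ⟨s, -, hnn, hzero, hsum⟩ := hg
  have hzero' : ∀ u, u ≠ v → g u = 0 := fun u hu => le_antisymm (h u hu) (hnn u)
  have hvs : v ∈ s := by_contra fun hvs => hv.ne' (hzero v hvs)
  have hv1 : g v = 1 := by
    rw [← hsum, Finset.sum_eq_single_of_mem v hvs fun u _ hu => hzero' u hu]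
  refine Or.inr ⟨v, funext fun u => ?_⟩
  by_cases hu : u = v
  · subst hu; simp [hv1]
  · simp [hu, hzero' u hu]

theorem single_mem_geomRealization {K : SComplex V} {v : V} (hv : {v} ∈ K.faces) :
    Pi.single v 1 ∈ geomRealization K := by
  refine ⟨{v}, hv, fun u => ?_, fun u hu => ?_, by simp⟩
  · by_cases h : u = v
    · subst h; simp
    · simp [h]
  · simp_all

theorem faces_finite_of_isCompact {K : SComplex V} (hK : IsCompact (geomRealization K)) :
    K.faces.Finite := by
  obtain ⟨T, hT⟩ := hK.elim_finite_subcover (fun v : V => {g : V → ℝ | 0 < g v})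
    (fun v => isOpen_lt continuous_const (continuous_apply v))
    fun g hg => mem_iUnion.2 (exists_pos_of_mem_geomRealization hg)
  refine T.powerset.finite_toSet.subset fun s hs => ?_
  rw [Finset.mem_coe, Finset.mem_powerset]
  intro v hv
  obtain ⟨w, hwT, hw⟩ := mem_iUnion₂.1 <| hT <| single_mem_geomRealization <|
    K.down_closed s hs {v} (Finset.singleton_subset_iff.2 hv) (Finset.singleton_nonempty v)
  obtain rfl : w = v := by
    by_contra hwv
    simp [Pi.single_eq_of_ne hwv] at hw
  exact hwT

theorem reach_symm {K : SComplex V} {u v : V} (h : Reach K u v) : Reach K v u := by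
  induction h with
  | refl => exact Relation.ReflTransGen.refl
  | tail _ hbc ih => exact Relation.ReflTransGen.head (by rwa [Finset.pair_comm]) ih

theorem componentOf_eq_of_reach {K : SComplex V} {u v : V} (h : Reach K u v) :
    componentOf K u = componentOf K v := by
  unfold componentOf
  congr 1
  ext t
  refine and_congr_right fun _ => forall₂_congr fun w _ => ⟨fun hw => ?_, fun hw => ?_⟩
  exacts [(reach_symm h).trans hw, h.trans hw]

theorem reach_fullSub_of_mem_face {K : SComplex V} {S : Set V} {s : Finset V}
    (hs : s ∈ K.faces) {u v : V} (hu : u ∈ s) (hv : v ∈ s) (huS : u ∈ S) (hvS : v ∈ S) :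
    Reach (fullSub K S) u v := by
  refine Relation.ReflTransGen.single ⟨K.down_closed s hs _ ?_ (Finset.insert_nonempty _ _), ?_⟩
  · exact Finset.insert_subset_iff.2 ⟨hu, Finset.singleton_subset_iff.2 hv⟩
  · simp [huS, hvS]

theorem reach_of_mem_face {K : SComplex V} {W : Set V} {s : Finset V} (hs : s ∈ K.faces)
    {u v : V} (hu : u ∈ s) (hv : v ∈ s) (huW : u ∉ W) (hvW : v ∉ W) :
    Reach (fullSub K (vertexSet K \ W)) u v :=
  have mem_vertexSet : ∀ x ∈ s, x ∈ vertexSet K := fun x hx =>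
    K.down_closed s hs {x} (Finset.singleton_subset_iff.2 hx) (Finset.singleton_nonempty x)
  reach_fullSub_of_mem_face hs hu hv ⟨mem_vertexSet u hu, huW⟩ ⟨mem_vertexSet v hv, hvW⟩

theorem exists_pos_notMem_or_pos_edge_subset {K : SComplex V} {W : Set V} {g : V → ℝ}
    (hg : g ∈ geomRealization K \ (fun w => Pi.single w 1) '' W) :
    (∃ u ∉ W, 0 < g u) ∨ ∃ e ∈ K.faces, e.card = 2 ∧ ↑e ⊆ W ∧ ∀ v ∈ e, 0 < g v := by
  by_cases hoff : ∃ u ∉ W, 0 < g u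
  · exact Or.inl hoff
  push Not at hoff
  have hposW : ∀ u, 0 < g u → u ∈ W := fun u hu => by_contra fun huW => (hoff u huW).not_gt hu
  rcases exists_pos_pair_or_eq_single hg.1 with ⟨u, v, huv, hu, hv⟩ | ⟨v, rfl⟩
  · obtain ⟨s, hs, hpos⟩ := exists_mem_faces_of_mem_geomRealization hg.1
    refine Or.inr ⟨{u, v}, K.down_closed s hs _ ?_ (Finset.insert_nonempty _ _),
      Finset.card_pair huv, ?_, ?_⟩
    · exact Finset.insert_subset_iff.2 ⟨hpos u hu, Finset.singleton_subset_iff.2 (hpos v hv)⟩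
    · simp [Set.insert_subset_iff, hposW u hu, hposW v hv]
    · simp [hu, hv]
  · exact (hg.2 ⟨v, hposW v (by simp), rfl⟩).elim

theorem single_mem_sdiff_image {K : SComplex V} {W : Set V} {x : V} (hx : {x} ∈ K.faces)
    (hxW : x ∉ W) : Pi.single x 1 ∈ geomRealization K \ (fun w => Pi.single w 1) '' W := by
  refine ⟨single_mem_geomRealization hx, fun ⟨w, hwW, hw⟩ => hxW ?_⟩
  obtain rfl : w = x := by_contra fun hwx => by
    simpa [Pi.single_apply, Ne.symm hwx] using congrFun hw x
  exact hwW

theorem reach_of_isPreconnected_sdiff {K : SComplex V} (hfin : K.faces.Finite) {W : Set V}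
    (hconn : IsPreconnected (geomRealization K \ (fun w => Pi.single w 1) '' W))
    (hunique : ∀ e ∈ K.faces, e.card = 2 → ↑e ⊆ W → ∃! F, F ∈ facets K ∧ e ⊆ F)
    {a b : V} (ha : {a} ∈ K.faces) (haW : a ∉ W) (hb : {b} ∈ K.faces) (hbW : b ∉ W) :
    Reach (fullSub K (vertexSet K \ W)) a b := by
  set J := fullSub K (vertexSet K \ W)
  set 𝒯 : Set (Finset V) := {t | (∃ u ∉ W, t = {u}) ∨ (t ∈ K.faces ∧ t.card = 2 ∧ ↑t ⊆ W)}
  set good : Finset V → Prop := fun F => ∃ v ∈ F, v ∉ W ∧ Reach J a v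
  have good_iff : ∀ F ∈ K.faces, ∀ u ∈ F, u ∉ W → (good F ↔ Reach J a u) :=
    fun F hF u hu huW => ⟨fun ⟨v, hv, hvW, hav⟩ => hav.trans (reach_of_mem_face hF hv hu hvW huW),
      fun hau => ⟨u, hu, huW, hau⟩⟩
  have good_facet : ∀ t ∈ 𝒯, ∀ F₁ ∈ facets K, ∀ F₂ ∈ facets K, t ⊆ F₁ → t ⊆ F₂ →
      good F₁ → good F₂ := by
    rintro t (⟨u, huW, rfl⟩ | ⟨he, hcard, heW⟩) F₁ hF₁ F₂ hF₂ h₁ h₂ hgood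
    · have hu₁ := Finset.singleton_subset_iff.1 h₁
      have hu₂ := Finset.singleton_subset_iff.1 h₂
      exact (good_iff F₂ hF₂.1 u hu₂ huW).2 ((good_iff F₁ hF₁.1 u hu₁ huW).1 hgood)
    · rwa [← (hunique t he hcard heW).unique ⟨hF₁, h₁⟩ ⟨hF₂, h₂⟩]
  have hcover : ∀ g ∈ geomRealization K \ (fun w => Pi.single w 1) '' W,
      ∃ t ∈ 𝒯, ∀ v ∈ t, 0 < g v := fun g hg => by
    rcases exists_pos_notMem_or_pos_edge_subset hg with ⟨u, huW, hu⟩ | ⟨e, he, hcard, heW, hpos⟩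
    exacts [⟨{u}, Or.inl ⟨u, huW, rfl⟩, by simpa⟩, ⟨e, Or.inr ⟨he, hcard, heW⟩, hpos⟩]
  have hcompat : ∀ g ∈ geomRealization K \ (fun w => Pi.single w 1) '' W, ∀ t ∈ 𝒯, ∀ t' ∈ 𝒯,
      (∀ v ∈ t, 0 < g v) → (∀ v ∈ t', 0 < g v) →
      (∃ F ∈ facets K, t ⊆ F ∧ good F) → ∃ F ∈ facets K, t' ⊆ F ∧ good F := by
    rintro g hg t ht t' - hpos hpos' ⟨F₁, hF₁, htF₁, hgood⟩
    obtain ⟨s, hs, hsupp⟩ := exists_mem_faces_of_mem_geomRealization hg.1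
    obtain ⟨F, hF, hsF⟩ := exists_facet_superset hfin hs
    exact ⟨F, hF, fun v hv => hsF (hsupp v (hpos' v hv)),
      good_facet t ht F₁ hF₁ F hF htF₁ (fun v hv => hsF (hsupp v (hpos v hv))) hgood⟩
  obtain ⟨Fa, hFa, haFa⟩ := exists_facet_superset hfin ha
  obtain ⟨F, hF, hbF, hgood⟩ := hconn.label_imp_label hcover hcompat
    (single_mem_sdiff_image ha haW) (single_mem_sdiff_image hb hbW)
    (Or.inl ⟨a, haW, rfl⟩) (Or.inl ⟨b, hbW, rfl⟩) (by simp) (by simp)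
    ⟨Fa, hFa, haFa, a, Finset.singleton_subset_iff.1 haFa, haW, Relation.ReflTransGen.refl⟩
  exact (good_iff F hF.1 b (Finset.singleton_subset_iff.1 hbF) hbW).1 hgood

/-- Lemma 2.2: if the maximal subcomplex `I` on `V \ W` has more than one component, then
there is an edge of `D` not in `∂D` with both endpoints in `W`. -/
theorem exists_interior_edge_of_disconnected (D : SComplex V) (hD : IsBall 2 D) (W : Set V)
    (hW : ∀ w ∈ W, {w} ∈ (boundaryC 2 D).faces)
    (I : SComplex V) (hI : I = fullSub D (vertexSet D \ W))
    (hmulti : ∃ C₁ C₂, IsComponentOf I C₁ ∧ IsComponentOf I C₂ ∧ C₁ ≠ C₂) :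
    ∃ e ∈ D.faces, e.card = 2 ∧ e ∉ (boundaryC 2 D).faces ∧ ∀ v ∈ e, v ∈ W := by
  subst hI
  by_contra hno
  push Not at hno
  have hunique : ∀ e ∈ D.faces, e.card = 2 → ↑e ⊆ W → ∃! F, F ∈ facets D ∧ e ⊆ F := by
    intro e he hcard heW
    refine existsUnique_facet_of_mem_boundaryC ?_ hcard
    by_contra hb
    obtain ⟨v, hv, hvW⟩ := hno e he hcard hb
    exact hvW (heW hv)
  have hfin : D.faces.Finite := faces_finite_of_isCompact hD.isCompact_geomRealization
  have hWV : W ⊆ vertexSet D := fun w hw => mem_faces_of_mem_boundaryC (hW w hw)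
  have hconn := hD.isPreconnected_geomRealization_sdiff le_rfl
    (((vertexSet_finite hfin).subset hWV).countable.image fun w => Pi.single w (1 : ℝ))
  obtain ⟨_, _, ⟨a, ha, rfl⟩, ⟨b, hb, rfl⟩, hne⟩ := hmulti
  exact hne <| componentOf_eq_of_reach <| reach_of_isPreconnected_sdiff hfin hconn hunique
    ha.1 (ha.2 a (Finset.mem_singleton_self a)).2 hb.1 (hb.2 b (Finset.mem_singleton_self b)).2

end SCPaper
end

section
/- In the simplicial 3-ball of Example 3.2, the subcomplex on vertices {9, 10, 11} with edges {9,10}, {10,11}, {9,11} is the unique maximal interior graph component. -/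
namespace SCPaper

variable {V : Type} [DecidableEq V]

/-- The 36 facets of the 3-ball of Example 3.2. -/
def exFacets : List (Finset ℕ) :=
  [{1,2,6,7}, {1,2,7,8}, {1,2,6,8}, {1,3,5,8}, {1,3,6,8}, {1,3,4,6}, {1,4,6,7}, {1,4,5,7},
   {1,5,7,8}, {5,8,9,11}, {3,5,8,9}, {3,6,8,9}, {3,6,9,10}, {3,4,6,10}, {4,6,7,10},
   {4,7,10,11}, {4,5,7,11}, {5,7,8,11}, {3,4,10,13}, {3,10,12,13}, {3,9,10,12}, {3,5,9,12},
   {5,9,12,14}, {5,9,11,14}, {4,5,11,14}, {4,11,13,14}, {4,10,11,13}, {6,7,10,13},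
   {6,10,12,13}, {6,9,10,12}, {6,8,9,12}, {8,9,12,14}, {8,9,11,14}, {7,8,11,14},
   {7,11,13,14}, {7,10,11,13}]

/-- The simplicial 3-ball of Example 3.2. -/
def exComplex : SComplex ℕ where
  faces := {t | t.Nonempty ∧ ∃ s ∈ exFacets, t ⊆ s}
  nonempty_mem := fun s hs => hs.1
  down_closed := by
    rintro s ⟨-, u, hu, hsu⟩ t ht hne
    exact ⟨hne, u, hu, ht.trans hsu⟩
/-- The 1-complex on vertices 9, 10, 11 with edges {9,10}, {10,11}, {9,11}. -/
def ringC : SComplex ℕ where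
  faces := {t | t.Nonempty ∧ t ⊆ ({9, 10, 11} : Finset ℕ) ∧ t.card ≤ 2}
  nonempty_mem := fun s hs => hs.1
  down_closed := fun s hs t ht hne =>
    ⟨hne, ht.trans hs.2.1, le_trans (Finset.card_le_card ht) hs.2.2⟩

/-! ### Auxiliary lemmas for the proof -/

lemma SComplex.ext' {K L : SComplex V} (h : K.faces = L.faces) : K = L := by
  cases K; cases L; cases h; rfl

lemma exFacets_card : ∀ F ∈ exFacets, F.card = 4 := by decide

lemma facets_ex : facets exComplex = {F | F ∈ exFacets} := by
  ext F
  constructor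
  · rintro ⟨⟨hne, G, hG, hFG⟩, hmax⟩
    have hGf : G ∈ exComplex.faces :=
      ⟨Finset.card_pos.1 (by rw [exFacets_card G hG]; norm_num), G, hG, Finset.Subset.refl G⟩
    have := hmax G hGf hFG
    rwa [this]
  · intro hF
    refine ⟨⟨Finset.card_pos.1 (by rw [exFacets_card F hF]; norm_num),
      F, hF, Finset.Subset.refl F⟩, ?_⟩
    rintro t ⟨hne, G, hG, htG⟩ hFt
    exact Finset.eq_of_subset_of_card_le hFt
      (le_trans (Finset.card_le_card htG) (by rw [exFacets_card G hG, exFacets_card F hF]))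

/-- Decidable characterization of boundary membership for a singleton. -/
def bdP (v : ℕ) : Prop :=
  ∃ F ∈ exFacets, ∃ s ∈ F.powerset, s.card = 3 ∧ v ∈ s ∧
    ∀ G ∈ exFacets, s ⊆ G → G = F

instance : DecidablePred bdP := fun v => by unfold bdP; infer_instance

lemma bd_singleton (v : ℕ) : {v} ∈ (boundaryC 3 exComplex).faces ↔ bdP v := by
  constructor
  · rintro ⟨-, s, hsf, hvs, hcard, F, ⟨hFfac, hsF⟩, huniq⟩
    have hF : F ∈ exFacets := by rwa [facets_ex] at hFfac
    refine ⟨F, hF, s, Finset.mem_powerset.2 hsF, hcard,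
      Finset.singleton_subset_iff.1 hvs, ?_⟩
    intro G hG hsG
    exact huniq G ⟨by rw [facets_ex]; exact hG, hsG⟩
  · rintro ⟨F, hF, s, hsp, hcard, hvs, huniq⟩
    have hsF : s ⊆ F := Finset.mem_powerset.1 hsp
    have hsne : s.Nonempty := ⟨v, hvs⟩
    refine ⟨Finset.singleton_nonempty v, s, ⟨hsne, F, hF, hsF⟩,
      Finset.singleton_subset_iff.2 hvs, hcard, F, ⟨by rw [facets_ex]; exact hF, hsF⟩, ?_⟩
    rintro G ⟨hGfac, hsG⟩
    have hG : G ∈ exFacets := by rwa [facets_ex] at hGfac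
    exact huniq G hG hsG

lemma exFacets_verts : ∀ F ∈ exFacets, F ⊆ ({1,2,3,4,5,6,7,8,9,10,11,12,13,14} : Finset ℕ) := by
  decide

lemma bd_of_not_ring :
    ∀ v ∈ ({1,2,3,4,5,6,7,8,9,10,11,12,13,14} : Finset ℕ),
      v ∈ ({9,10,11} : Finset ℕ) ∨ bdP v := by decide

lemma not_bd_ring : ∀ v ∈ ({9,10,11} : Finset ℕ), ¬ bdP v := by decide

lemma ring_vertex_face : ∀ v ∈ ({9,10,11} : Finset ℕ), ∃ F ∈ exFacets, ({v} : Finset ℕ) ⊆ F := by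
  decide

lemma interior_iff (v : ℕ) :
    IsInteriorVertex exComplex v ↔ v ∈ ({9,10,11} : Finset ℕ) := by
  constructor
  · rintro ⟨⟨-, F, hF, hvF⟩, hnb⟩
    have hv14 : v ∈ ({1,2,3,4,5,6,7,8,9,10,11,12,13,14} : Finset ℕ) :=
      exFacets_verts F hF (Finset.singleton_subset_iff.1 hvF)
    rcases bd_of_not_ring v hv14 with h | h
    · exact h
    · exact absurd ((bd_singleton v).2 h) hnb
  · intro hv
    obtain ⟨F, hF, hvF⟩ := ring_vertex_face v hv
    exact ⟨⟨Finset.singleton_nonempty v, F, hF, hvF⟩,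
      fun hb => not_bd_ring v hv ((bd_singleton v).1 hb)⟩

lemma ring_face_is_face :
    ∀ t ∈ (Finset.powerset ({9,10,11} : Finset ℕ)), t.Nonempty → t.card ≤ 2 →
      ∃ F ∈ exFacets, t ⊆ F := by decide

lemma ig_eq : (interiorGraph exComplex).faces = ringC.faces := by
  ext t
  constructor
  · rintro ⟨htf, hcard, hint⟩
    exact ⟨exComplex.nonempty_mem t htf,
      fun v hv => (interior_iff v).1 (hint v hv), hcard⟩
  · rintro ⟨hne, hsub, hcard⟩
    obtain ⟨F, hF, htF⟩ :=
      ring_face_is_face t (Finset.mem_powerset.2 hsub) hne hcard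
    exact ⟨⟨hne, F, hF, htF⟩, hcard, fun v hv => (interior_iff v).2 (hsub hv)⟩

lemma edge_reach (a b : ℕ) (h : ({a, b} : Finset ℕ) ∈ ringC.faces) :
    Reach (interiorGraph exComplex) a b :=
  Relation.ReflTransGen.single (by rw [ig_eq]; exact h)

lemma ring_edge_mem : ∀ a ∈ ({9,10,11} : Finset ℕ), ∀ b ∈ ({9,10,11} : Finset ℕ),
    ({a, b} : Finset ℕ) ∈ ringC.faces := by
  intro a ha b hb
  refine ⟨⟨a, by simp⟩, ?_, ?_⟩
  · intro x hx
    rcases Finset.mem_insert.1 hx with rfl | hx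
    · exact ha
    · rw [Finset.mem_singleton.1 hx]; exact hb
  · exact le_trans (Finset.card_insert_le a {b}) (by simp)

lemma reach_ring : ∀ a ∈ ({9,10,11} : Finset ℕ), ∀ b ∈ ({9,10,11} : Finset ℕ),
    Reach (interiorGraph exComplex) a b := by
  intro a ha b hb
  exact edge_reach a b (ring_edge_mem a ha b hb)

lemma comp_eq (v : ℕ) (hv : v ∈ ({9,10,11} : Finset ℕ)) :
    componentOf (interiorGraph exComplex) v = ringC := by
  apply SComplex.ext'
  ext t
  constructor
  · rintro ⟨h1, -⟩
    rw [ig_eq] at h1; exact h1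
  · intro h
    have h' : t ∈ (interiorGraph exComplex).faces := by rw [ig_eq]; exact h
    exact ⟨h', fun u hu => reach_ring v hv u (h.2.1 hu)⟩

/-- `ringC` is the unique maximal interior graph component of Example 3.2. -/
theorem ring_unique_maxIntComp :
    IsMaxIntComp exComplex ringC ∧ ∀ I, IsMaxIntComp exComplex I → I = ringC := by
  have h9 : ({9} : Finset ℕ) ∈ (interiorGraph exComplex).faces := by
    rw [ig_eq]
    exact ⟨Finset.singleton_nonempty 9, by decide, by decide⟩
  constructor
  · exact ⟨9, h9, (comp_eq 9 (by decide)).symm⟩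
  · rintro I ⟨v, hv, rfl⟩
    rw [ig_eq] at hv
    have hv' : v ∈ ({9,10,11} : Finset ℕ) := hv.2.1 (Finset.mem_singleton_self v)
    exact comp_eq v hv'

end SCPaper
end
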